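/- Fix γ with 0 < γ ≤ 1/3. Then lim_{ε→0⁺} ∫_{x₃=0}^{1} ∫_{r=0}^{ε} (1/r)·(u_ρ^ε(r, x₃)·sin f_ε(r))² dr dx₃ = 1/2. -/

import Mathlib

open MeasureTheory Filter Topology Real

/-- The zenith-angle function `f_ε(r) = arctan(r/ε²) + (arctan ε)·r/ε`. -/
noncomputable def fe (ε r : ℝ) : ℝ := Real.arctan (r / ε ^ 2) + Real.arctan ε * r / ε

/-- Its derivative `f_ε'(r) = ε²/(ε⁴ + r²) + (arctan ε)/ε`. -/
noncomputable def fder (ε r : ℝ) : ℝ := ε ^ 2 / (ε ^ 4 + r ^ 2) + Real.arctan ε / ε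

/-- The radial component of the recovery sequence in region `c_ε`:
`u_ρ^ε(r, x₃) = ((cos f_ε(r) + 2ε^γ)³ + 3·x₃·r/(sin(f_ε(r))·f_ε'(r)))^{1/3}`. -/
noncomputable def urho (γ ε r x : ℝ) : ℝ :=
  ((Real.cos (fe ε r) + 2 * ε ^ γ) ^ 3
      + 3 * x * r / (Real.sin (fe ε r) * fder ε r)) ^ ((1 : ℝ) / 3)

/-!
Write `s, c` for `sin f_ε(r), cos f_ε(r)` and `B = 3x₃r / (s f_ε'(r))`, so that the integrand is
`s² ((c + 2ε^γ)³ + B)^{2/3} / r`. Since `A² ≤ (A³ + B)^{2/3} ≤ A² + B^{2/3}`, it lies between `s²c²/r`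
and `s²c²/r + 8ε^γ s²/r + (s³B)^{2/3}/r`; with `ε² s ≤ 2r` and `f_ε' ≥ 1/2` the two extra terms are
`O(r^{γ/2-1} + r^{-1/3})`, integrable near `0` and independent of `ε`.
Moreover `f_ε` is within `r` of `a = arctan (r/ε²)` and `sin² cos²` is `1/2`-Lipschitz, so `s²c²/r`
is within `1/2` of `sin² a cos² a / r = rε⁴/(ε⁴ + r²)²`, whose integral over `(0, ε)` is
`1/2 - ε²/(2(ε² + 1))`. The double integral therefore differs from this by at most the integral over
`(0, ε)` of a fixed integrable function, which tends to `0`.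
-/

lemma arctan_le_self {x : ℝ} (hx : 0 ≤ x) : arctan x ≤ x := by
  simpa only [tan_arctan] using le_tan (arctan_nonneg.2 hx) (arctan_lt_pi_div_two x)

lemma half_le_arctan {x : ℝ} (hx0 : 0 ≤ x) (hx1 : x ≤ 1) : x / 2 ≤ arctan x := by
  have hsqrt : √(1 + x ^ 2) ≤ 2 := by
    rw [sqrt_le_left zero_le_two]
    nlinarith
  calc x / 2 ≤ x / √(1 + x ^ 2) := by gcongr
    _ = sin (arctan x) := (sin_arctan x).symm
    _ ≤ arctan x := sin_le (arctan_nonneg.2 hx0)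

lemma sin_sq_mul_cos_sq (x : ℝ) : sin x ^ 2 * cos x ^ 2 = (1 - cos (4 * x)) / 8 := by
  rw [show 4 * x = 2 * (2 * x) by ring, cos_two_mul, cos_two_mul, sin_sq]
  ring

lemma abs_sin_sq_mul_cos_sq_sub_le (a b : ℝ) :
    |sin a ^ 2 * cos a ^ 2 - sin b ^ 2 * cos b ^ 2| ≤ |a - b| / 2 := by
  have h : |cos (4 * b) - cos (4 * a)| ≤ 4 * |a - b| := by
    simpa [← mul_sub, abs_mul, abs_sub_comm b a] using
      abs_cos_sub_cos_le (4 * b) (4 * a)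
  rw [sin_sq_mul_cos_sq, sin_sq_mul_cos_sq,
    show (1 - cos (4 * a)) / 8 - (1 - cos (4 * b)) / 8 = (cos (4 * b) - cos (4 * a)) / 8 by ring,
    abs_div, abs_of_pos (by norm_num : (0 : ℝ) < 8)]
  linarith

lemma pow_three_rpow_two_thirds {A : ℝ} (hA : 0 ≤ A) : (A ^ 3) ^ (2 / 3 : ℝ) = A ^ 2 := by
  rw [← rpow_natCast, ← rpow_mul hA]
  norm_num

lemma sq_le_rpow_two_thirds_cube_add {A B : ℝ} (hA : 0 ≤ A) (hB : 0 ≤ B) :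
    A ^ 2 ≤ (A ^ 3 + B) ^ (2 / 3 : ℝ) := by
  rw [← pow_three_rpow_two_thirds hA]
  gcongr
  linarith

lemma rpow_two_thirds_cube_add_le {A B : ℝ} (hA : 0 ≤ A) (hB : 0 ≤ B) :
    (A ^ 3 + B) ^ (2 / 3 : ℝ) ≤ A ^ 2 + B ^ (2 / 3 : ℝ) := by
  simpa only [pow_three_rpow_two_thirds hA] using
    rpow_add_le_add_rpow (p := 2 / 3) (pow_nonneg hA 3) hB (by norm_num) (by norm_num)

lemma tendsto_setIntegral_Ioo_zero {g : ℝ → ℝ} (hg : IntervalIntegrable g volume 0 1) :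
    Tendsto (fun ε => ∫ r in Set.Ioo 0 ε, g r) (𝓝[>] 0) (𝓝 0) := by
  have hcont : ContinuousWithinAt (fun b => ∫ r in (0)..b, g r) (Set.Icc 0 1) 0 :=
    intervalIntegral.continuousWithinAt_primitive Real.volume_singleton (by simpa using hg)
  have hlim := (hcont.mono_of_mem_nhdsWithin (Icc_mem_nhdsGT zero_lt_one)).tendsto
  rw [intervalIntegral.integral_same] at hlim
  refine hlim.congr' ?_
  filter_upwards [self_mem_nhdsWithin] with ε (hε : 0 < ε)
  rw [intervalIntegral.integral_of_le hε.le, integral_Ioc_eq_integral_Ioo]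

/-- The energy density `sin² a · cos² a / r` of the pure profile `a = arctan (r / ε²)`,
in closed form. -/
noncomputable def arctanDensity (ε r : ℝ) : ℝ := r * ε ^ 4 / (ε ^ 4 + r ^ 2) ^ 2

lemma sin_sq_mul_cos_sq_arctan_div {ε r : ℝ} (hε : ε ≠ 0) (hr : r ≠ 0) :
    sin (arctan (r / ε ^ 2)) ^ 2 * cos (arctan (r / ε ^ 2)) ^ 2 / r = arctanDensity ε r := by
  rw [sin_sq_arctan, cos_sq_arctan, arctanDensity]
  field_simp

lemma continuous_arctanDensity {ε : ℝ} (hε : ε ≠ 0) : Continuous (arctanDensity ε) :=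
  (continuous_id.mul continuous_const).div (by fun_prop) fun r => by positivity

lemma integral_arctanDensity {ε : ℝ} (hε : 0 < ε) :
    ∫ r in Set.Ioo 0 ε, arctanDensity ε r = 1 / 2 - ε ^ 2 / (2 * (ε ^ 2 + 1)) := by
  have hderiv : ∀ r ∈ Set.uIcc 0 ε,
      HasDerivAt (fun r => -ε ^ 4 / 2 * (ε ^ 4 + r ^ 2)⁻¹) (arctanDensity ε r) r := by
    intro r _
    refine ((((hasDerivAt_pow 2 r).const_add (ε ^ 4)).inv (by positivity)).const_mul
      (-ε ^ 4 / 2)).congr_deriv ?_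
    rw [arctanDensity]
    push_cast
    ring
  rw [← integral_Ioc_eq_integral_Ioo, ← intervalIntegral.integral_of_le hε.le,
    intervalIntegral.integral_eq_sub_of_hasDerivAt hderiv
      ((continuous_arctanDensity hε.ne').intervalIntegrable 0 ε)]
  field_simp
  ring

lemma tendsto_integral_arctanDensity :
    Tendsto (fun ε => ∫ r in Set.Ioo 0 ε, arctanDensity ε r) (𝓝[>] 0) (𝓝 (1 / 2)) := by
  have hcont : Continuous fun ε : ℝ => 1 / 2 - ε ^ 2 / (2 * (ε ^ 2 + 1)) :=
    continuous_const.sub (continuous_pow 2 |>.div (by fun_prop) fun ε => by positivity)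
  have hlim : Tendsto (fun ε : ℝ => 1 / 2 - ε ^ 2 / (2 * (ε ^ 2 + 1))) (𝓝[>] 0) (𝓝 (1 / 2)) := by
    simpa using (hcont.tendsto 0).mono_left nhdsWithin_le_nhds
  refine hlim.congr' ?_
  filter_upwards [self_mem_nhdsWithin] with ε (hε : 0 < ε)
  rw [integral_arctanDensity hε]

section Profile

variable {ε r : ℝ}

lemma fe_pos (hε : 0 < ε) (hr : 0 < r) : 0 < fe ε r := by
  have : 0 < arctan ε := arctan_pos.2 hε
  have : 0 < arctan (r / ε ^ 2) := arctan_pos.2 (by positivity)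
  rw [fe]
  positivity

lemma fe_le_pi_div_two (hε : 0 < ε) (hrε : r ≤ ε) : fe ε r ≤ π / 2 := by
  have h₁ : arctan (r / ε ^ 2) ≤ arctan ε⁻¹ := by
    gcongr
    calc r / ε ^ 2 ≤ ε / ε ^ 2 := by gcongr
      _ = ε⁻¹ := by field_simp
  have h₂ : arctan ε * r / ε ≤ arctan ε := by
    rw [mul_div_assoc]
    exact mul_le_of_le_one_right (arctan_nonneg.2 hε.le) ((div_le_one hε).2 hrε)
  rw [fe]
  linarith [arctan_inv_of_pos hε]

lemma sin_fe_pos (hε : 0 < ε) (hr : 0 < r) (hrε : r ≤ ε) : 0 < sin (fe ε r) :=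
  sin_pos_of_pos_of_lt_pi (fe_pos hε hr) (by linarith [fe_le_pi_div_two hε hrε, pi_pos])

lemma cos_fe_nonneg (hε : 0 < ε) (hr : 0 < r) (hrε : r ≤ ε) : 0 ≤ cos (fe ε r) :=
  cos_nonneg_of_mem_Icc ⟨by linarith [fe_pos hε hr, pi_pos], fe_le_pi_div_two hε hrε⟩

lemma arctan_mul_div_le (hε : 0 < ε) (hr : 0 ≤ r) : arctan ε * r / ε ≤ r := by
  rw [div_le_iff₀ hε, mul_comm r]
  exact mul_le_mul_of_nonneg_right (arctan_le_self hε.le) hr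

lemma abs_fe_sub_arctan_le (hε : 0 < ε) (hr : 0 ≤ r) : |fe ε r - arctan (r / ε ^ 2)| ≤ r := by
  rw [fe, add_sub_cancel_left, abs_of_nonneg (by have := arctan_nonneg.2 hε.le; positivity)]
  exact arctan_mul_div_le hε hr

lemma sq_mul_sin_fe_le (hε : 0 < ε) (hε1 : ε ≤ 1) (hr : 0 ≤ r) :
    ε ^ 2 * sin (fe ε r) ≤ 2 * r := by
  have hfe : fe ε r ≤ r / ε ^ 2 + r :=
    add_le_add (arctan_le_self (by positivity)) (arctan_mul_div_le hε hr)
  have hsin : sin (fe ε r) ≤ fe ε r :=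
    sin_le (add_nonneg (arctan_nonneg.2 (by positivity)) (by have := arctan_nonneg.2 hε.le; positivity))
  calc ε ^ 2 * sin (fe ε r) ≤ ε ^ 2 * (r / ε ^ 2 + r) := by gcongr; linarith
    _ = r + ε ^ 2 * r := by field_simp
    _ ≤ 2 * r := by nlinarith [pow_le_one₀ hε.le hε1 (n := 2)]

lemma fder_pos (hε : 0 < ε) : 0 < fder ε r := by
  have := arctan_pos.2 hε
  rw [fder]
  positivity

lemma half_le_fder (hε : 0 < ε) (hε1 : ε ≤ 1) : 1 / 2 ≤ fder ε r := by
  have h₁ : 1 / 2 ≤ arctan ε / ε := by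
    rw [le_div_iff₀ hε]
    linarith [half_le_arctan hε.le hε1]
  have h₂ : 0 ≤ ε ^ 2 / (ε ^ 4 + r ^ 2) := by positivity
  rw [fder]
  linarith

end Profile

noncomputable def energyDensity (γ ε x r : ℝ) : ℝ := 1 / r * (urho γ ε r x * sin (fe ε r)) ^ 2

noncomputable def energyErrorBound (γ r : ℝ) : ℝ :=
  1 / 2 + 8 * 2 ^ (γ / 2) * r ^ (γ / 2 - 1) + 6 ^ (2 / 3 : ℝ) * r ^ (-1 / 3 : ℝ)

lemma intervalIntegrable_energyErrorBound {γ : ℝ} (hγ : 0 < γ) (a b : ℝ) :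
    IntervalIntegrable (energyErrorBound γ) volume a b :=
  (intervalIntegrable_const.add
      ((intervalIntegral.intervalIntegrable_rpow' (by linarith)).const_mul _)).add
    ((intervalIntegral.intervalIntegrable_rpow' (by norm_num)).const_mul _)

lemma measurable_energyDensity (γ ε : ℝ) : Measurable (Function.uncurry (energyDensity γ ε)) := by
  simp only [Function.uncurry_def, energyDensity, urho, fe, fder]
  fun_prop

section Pointwise

variable {γ ε r x : ℝ}

lemma abs_sin_sq_mul_cos_sq_fe_div_sub_le (hε : 0 < ε) (hr : 0 < r) :
    |sin (fe ε r) ^ 2 * cos (fe ε r) ^ 2 / r - arctanDensity ε r| ≤ 1 / 2 := by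
  rw [← sin_sq_mul_cos_sq_arctan_div hε.ne' hr.ne', ← sub_div, abs_div, abs_of_pos hr,
    div_le_iff₀ hr]
  linarith [abs_sin_sq_mul_cos_sq_sub_le (fe ε r) (arctan (r / ε ^ 2)),
    abs_fe_sub_arctan_le hε hr.le]

lemma rpow_mul_sin_fe_sq_div_le (hγ0 : 0 ≤ γ) (hγ4 : γ ≤ 4) (hε : 0 < ε) (hε1 : ε ≤ 1)
    (hr : 0 < r) (hrε : r ≤ ε) :
    ε ^ γ * sin (fe ε r) ^ 2 / r ≤ 2 ^ (γ / 2) * r ^ (γ / 2 - 1) := by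
  have hs := sin_fe_pos hε hr hrε
  have hs_sq : sin (fe ε r) ^ 2 ≤ sin (fe ε r) ^ (γ / 2) := by
    rw [← rpow_natCast]
    exact rpow_le_rpow_of_exponent_ge hs (sin_le_one _) (by push_cast; linarith)
  have hε_rpow : ε ^ γ = (ε ^ 2) ^ (γ / 2) := by
    rw [← rpow_natCast, ← rpow_mul hε.le]
    ring_nf
  calc ε ^ γ * sin (fe ε r) ^ 2 / r ≤ (ε ^ 2) ^ (γ / 2) * sin (fe ε r) ^ (γ / 2) / r := by
        rw [hε_rpow]
        gcongr
    _ = (ε ^ 2 * sin (fe ε r)) ^ (γ / 2) / r := by rw [mul_rpow (by positivity) hs.le]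
    _ ≤ (2 * r) ^ (γ / 2) / r := by
        gcongr ?_ / r
        exact rpow_le_rpow (by positivity) (sq_mul_sin_fe_le hε hε1 hr.le) (by positivity)
    _ = 2 ^ (γ / 2) * r ^ (γ / 2 - 1) := by
        rw [mul_rpow zero_le_two hr.le, rpow_sub_one hr.ne', mul_div_assoc]

lemma rpow_two_thirds_sin_fe_cube_mul_div_le (hε : 0 < ε) (hε1 : ε ≤ 1) (hr : 0 < r)
    (hrε : r ≤ ε) (hx0 : 0 ≤ x) (hx1 : x ≤ 1) :
    (sin (fe ε r) ^ 3 * (3 * x * r / (sin (fe ε r) * fder ε r))) ^ (2 / 3 : ℝ) / r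
      ≤ 6 ^ (2 / 3 : ℝ) * r ^ (-1 / 3 : ℝ) := by
  have hs := sin_fe_pos hε hr hrε
  have hd := half_le_fder (r := r) hε hε1
  have hsd : sin (fe ε r) ^ 3 * (3 * x * r / (sin (fe ε r) * fder ε r))
      = 3 * x * r * sin (fe ε r) ^ 2 / fder ε r := by
    field_simp
  have hbound : 3 * x * r * sin (fe ε r) ^ 2 / fder ε r ≤ 6 * r := by
    rw [div_le_iff₀ (by linarith)]
    have hxs : x * sin (fe ε r) ^ 2 ≤ 1 :=
      mul_le_one₀ hx1 (by positivity) (pow_le_one₀ hs.le (sin_le_one _))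
    nlinarith [mul_le_mul_of_nonneg_left hxs hr.le, mul_le_mul_of_nonneg_left hd hr.le]
  calc (sin (fe ε r) ^ 3 * (3 * x * r / (sin (fe ε r) * fder ε r))) ^ (2 / 3 : ℝ) / r
      ≤ (6 * r) ^ (2 / 3 : ℝ) / r := by
        rw [hsd]
        gcongr
    _ = 6 ^ (2 / 3 : ℝ) * r ^ (-1 / 3 : ℝ) := by
        rw [mul_rpow (by norm_num) hr.le, mul_div_assoc, ← rpow_sub_one hr.ne']
        norm_num

lemma energyDensity_eq (hε : 0 < ε) (hr : 0 < r) (hrε : r ≤ ε) (hx : 0 ≤ x) :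
    energyDensity γ ε x r = sin (fe ε r) ^ 2 *
      ((cos (fe ε r) + 2 * ε ^ γ) ^ 3 + 3 * x * r / (sin (fe ε r) * fder ε r)) ^ (2 / 3 : ℝ) / r := by
  have := sin_fe_pos hε hr hrε
  have := cos_fe_nonneg hε hr hrε
  have := fder_pos (r := r) hε
  rw [energyDensity, urho, mul_pow, ← rpow_natCast, ← rpow_mul (by positivity)]
  norm_num
  ring

lemma sin_sq_mul_cos_sq_fe_div_le_energyDensity (hε : 0 < ε) (hr : 0 < r) (hrε : r ≤ ε)
    (hx : 0 ≤ x) :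
    sin (fe ε r) ^ 2 * cos (fe ε r) ^ 2 / r ≤ energyDensity γ ε x r := by
  have hc := cos_fe_nonneg hε hr hrε
  have := sin_fe_pos hε hr hrε
  have := fder_pos (r := r) hε
  rw [energyDensity_eq hε hr hrε hx]
  gcongr
  calc cos (fe ε r) ^ 2 ≤ (cos (fe ε r) + 2 * ε ^ γ) ^ 2 := by gcongr; linarith [rpow_nonneg hε.le γ]
    _ ≤ _ := sq_le_rpow_two_thirds_cube_add (by positivity) (by positivity)

lemma energyDensity_le (hγ0 : 0 ≤ γ) (hγ4 : γ ≤ 4) (hε : 0 < ε) (hε1 : ε ≤ 1) (hr : 0 < r)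
    (hrε : r ≤ ε) (hx0 : 0 ≤ x) (hx1 : x ≤ 1) :
    energyDensity γ ε x r ≤ sin (fe ε r) ^ 2 * cos (fe ε r) ^ 2 / r
      + 8 * 2 ^ (γ / 2) * r ^ (γ / 2 - 1) + 6 ^ (2 / 3 : ℝ) * r ^ (-1 / 3 : ℝ) := by
  set s := sin (fe ε r)
  set c := cos (fe ε r)
  set B := 3 * x * r / (s * fder ε r)
  have hs : 0 < s := sin_fe_pos hε hr hrε
  have hc : 0 ≤ c := cos_fe_nonneg hε hr hrε
  have hB : 0 ≤ B := by have := fder_pos (r := r) hε; positivity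
  have hεγ : 0 ≤ ε ^ γ := rpow_nonneg hε.le γ
  have hA : (c + 2 * ε ^ γ) ^ 2 ≤ c ^ 2 + 8 * ε ^ γ := by
    nlinarith [cos_le_one (fe ε r), rpow_le_one hε.le hε1 hγ0]
  have hsB : s ^ 2 * B ^ (2 / 3 : ℝ) = (s ^ 3 * B) ^ (2 / 3 : ℝ) := by
    rw [mul_rpow (by positivity) hB, pow_three_rpow_two_thirds hs.le]
  rw [energyDensity_eq hε hr hrε hx0]
  calc s ^ 2 * ((c + 2 * ε ^ γ) ^ 3 + B) ^ (2 / 3 : ℝ) / r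
      ≤ s ^ 2 * (c ^ 2 + 8 * ε ^ γ + B ^ (2 / 3 : ℝ)) / r := by
        gcongr
        exact (rpow_two_thirds_cube_add_le (by positivity) hB).trans (by linarith)
    _ = s ^ 2 * c ^ 2 / r + 8 * (ε ^ γ * s ^ 2 / r) + (s ^ 3 * B) ^ (2 / 3 : ℝ) / r := by
        rw [← hsB]
        ring
    _ ≤ s ^ 2 * c ^ 2 / r + 8 * (2 ^ (γ / 2) * r ^ (γ / 2 - 1))
          + 6 ^ (2 / 3 : ℝ) * r ^ (-1 / 3 : ℝ) := by
        gcongr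
        · exact rpow_mul_sin_fe_sq_div_le hγ0 hγ4 hε hε1 hr hrε
        · exact rpow_two_thirds_sin_fe_cube_mul_div_le hε hε1 hr hrε hx0 hx1
    _ = _ := by ring

lemma abs_energyDensity_sub_arctanDensity_le (hγ0 : 0 ≤ γ) (hγ4 : γ ≤ 4) (hε : 0 < ε)
    (hε1 : ε ≤ 1) (hr : 0 < r) (hrε : r ≤ ε) (hx0 : 0 ≤ x) (hx1 : x ≤ 1) :
    |energyDensity γ ε x r - arctanDensity ε r| ≤ energyErrorBound γ r := by
  have hlower := sin_sq_mul_cos_sq_fe_div_le_energyDensity (γ := γ) hε hr hrε hx0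
  have hupper := energyDensity_le hγ0 hγ4 hε hε1 hr hrε hx0 hx1
  have hprofile := abs_le.1 (abs_sin_sq_mul_cos_sq_fe_div_sub_le hε hr)
  have : 0 ≤ 8 * 2 ^ (γ / 2) * r ^ (γ / 2 - 1) + 6 ^ (2 / 3 : ℝ) * r ^ (-1 / 3 : ℝ) := by
    positivity
  rw [abs_le, energyErrorBound]
  constructor <;> linarith

end Pointwise

section Integral

variable {γ ε : ℝ}

lemma abs_integral_energyDensity_sub_le (hγ0 : 0 < γ) (hγ4 : γ ≤ 4) (hε : 0 < ε) (hε1 : ε ≤ 1)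
    {x : ℝ} (hx0 : 0 ≤ x) (hx1 : x ≤ 1) :
    |(∫ r in Set.Ioo 0 ε, energyDensity γ ε x r) - ∫ r in Set.Ioo 0 ε, arctanDensity ε r|
      ≤ ∫ r in Set.Ioo 0 ε, energyErrorBound γ r := by
  have hbound : ∀ r ∈ Set.Ioo 0 ε,
      ‖energyDensity γ ε x r - arctanDensity ε r‖ ≤ energyErrorBound γ r := fun r hr =>
    abs_energyDensity_sub_arctanDensity_le hγ0.le hγ4 hε hε1 hr.1 hr.2.le hx0 hx1
  have hE : IntegrableOn (energyErrorBound γ) (Set.Ioo 0 ε) :=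
    (intervalIntegrable_energyErrorBound hγ0 0 ε).1.mono_set Set.Ioo_subset_Ioc_self
  have hφ : IntegrableOn (arctanDensity ε) (Set.Ioo 0 ε) :=
    (continuous_arctanDensity hε.ne').integrableOn_Icc.mono_set Set.Ioo_subset_Icc_self
  have hH : IntegrableOn (energyDensity γ ε x) (Set.Ioo 0 ε) := by
    refine (hE.add hφ).mono'
      ((measurable_energyDensity γ ε).comp measurable_prodMk_left).aestronglyMeasurable
      ((ae_restrict_iff' measurableSet_Ioo).2 (.of_forall fun r hr => ?_))
    have hH_nonneg : 0 ≤ energyDensity γ ε x r := by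
      have := hr.1
      rw [energyDensity]
      positivity
    rw [norm_of_nonneg hH_nonneg, Pi.add_apply]
    linarith [(abs_le.1 (hbound r hr)).2]
  have h := norm_integral_le_of_norm_le hE
    ((ae_restrict_iff' measurableSet_Ioo).2 (.of_forall hbound))
  rwa [integral_sub hH hφ, norm_eq_abs] at h

lemma abs_integral_integral_energyDensity_sub_le (hγ0 : 0 < γ) (hγ4 : γ ≤ 4) (hε : 0 < ε)
    (hε1 : ε ≤ 1) :
    |(∫ x in Set.Ioo 0 1, ∫ r in Set.Ioo 0 ε, energyDensity γ ε x r)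
        - ∫ r in Set.Ioo 0 ε, arctanDensity ε r|
      ≤ ∫ r in Set.Ioo 0 ε, energyErrorBound γ r := by
  set I := ∫ r in Set.Ioo 0 ε, arctanDensity ε r
  set J := ∫ r in Set.Ioo 0 ε, energyErrorBound γ r
  have hbound : ∀ x ∈ Set.Ioo (0 : ℝ) 1,
      ‖(∫ r in Set.Ioo 0 ε, energyDensity γ ε x r) - I‖ ≤ J := fun x hx =>
    abs_integral_energyDensity_sub_le hγ0 hγ4 hε hε1 hx.1.le hx.2.le
  have hF : IntegrableOn (fun x => ∫ r in Set.Ioo 0 ε, energyDensity γ ε x r) (Set.Ioo 0 1) := by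
    refine .of_bound measure_Ioo_lt_top ((measurable_energyDensity γ ε).stronglyMeasurable
      |>.integral_prod_right).aestronglyMeasurable (|I| + J)
      ((ae_restrict_iff' measurableSet_Ioo).2 (.of_forall fun x hx => ?_))
    have := hbound x hx
    rw [norm_eq_abs] at this ⊢
    linarith [abs_sub_abs_le_abs_sub (∫ r in Set.Ioo 0 ε, energyDensity γ ε x r) I]
  have h := norm_setIntegral_le_of_norm_le_const (μ := volume) measure_Ioo_lt_top hbound
  rwa [integral_sub hF (integrableOn_const (μ := volume) measure_Ioo_lt_top.ne), setIntegral_const,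
    Real.volume_real_Ioo_of_le zero_le_one, sub_zero, one_smul, mul_one, norm_eq_abs] at h

end Integral

/-- for `0 < γ ≤ 1/3`,
`lim_{ε→0⁺} ∫₀¹ ∫₀^ε (1/r)·(u_ρ^ε(r,x₃)·sin f_ε(r))² dr dx₃ = 1/2`. -/
theorem energy_part_II (γ : ℝ) (hγ0 : 0 < γ) (hγ : γ ≤ 1 / 3) :
    Tendsto (fun ε : ℝ =>
        ∫ x in Set.Ioo (0 : ℝ) 1, ∫ r in Set.Ioo (0 : ℝ) ε,
          (1 / r) * (urho γ ε r x * Real.sin (fe ε r)) ^ 2)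
      (𝓝[>] 0) (𝓝 (1 / 2)) := by
  have herror := tendsto_setIntegral_Ioo_zero (intervalIntegrable_energyErrorBound hγ0 0 1)
  refine tendsto_integral_arctanDensity.congr_dist
    (squeeze_zero' (.of_forall fun _ => dist_nonneg) ?_ herror)
  filter_upwards [Ioo_mem_nhdsGT zero_lt_one] with ε hε
  rw [dist_comm, dist_eq]
  exact abs_integral_integral_energyDensity_sub_le hγ0 (by linarith) hε.1 hε.2.le
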